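/- Let f : ℤ⁴ → ℝ be the quadratic multimodular function f(x) = xᵀAx with A having rows (3,2,1,0), (2,3,2,1), (1,2,2,1), (0,1,1,1). Then the projection f^U(y₁,y₂,y₄) = inf_{x₃ ∈ ℤ} f(y₁,y₂,x₃,y₄) to U = {1,2,4} is not multimodular. Hence projection of a multimodular function to a non-interval subset of coordinates need not be multimodular. -/

import Mathlib

/-- The set of multimodular directions
`F = {-e₁, e₁-e₂, e₂-e₃, …, e_{n-1}-eₙ, eₙ}` (1-indexed unit vectors). -/
def mmDir (n : ℕ) : Set (Fin n → ℤ) :=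
  {d | ∃ k ≤ n, d = fun j : Fin n =>
    (if (j : ℕ) + 1 = k then 1 else 0) - (if (j : ℕ) + 1 = k + 1 then 1 else 0)}

/-- `f : ℤⁿ → ℝ ∪ {+∞}` is multimodular. -/
def Multimodular {n : ℕ} (f : (Fin n → ℤ) → WithTop ℝ) : Prop :=
  ∀ z : Fin n → ℤ, f z ≠ ⊤ →
    ∀ d ∈ mmDir n, ∀ d' ∈ mmDir n, d ≠ d' →
      f z + f (z + d + d') ≤ f (z + d) + f (z + d')

/-- Submodularity on `ℤᵐ`. -/
def Submodular {m : ℕ} (h : (Fin m → ℤ) → WithTop ℝ) : Prop :=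
  ∀ x y : Fin m → ℤ, h (x ⊔ y) + h (x ⊓ y) ≤ h x + h y

/-- L♮-convexity via discrete midpoint convexity. -/
def LnatConvex {n : ℕ} (g : (Fin n → ℤ) → WithTop ℝ) : Prop :=
  ∀ p q : Fin n → ℤ,
    g (fun j => Int.fdiv (p j + q j + 1) 2) + g (fun j => Int.fdiv (p j + q j) 2)
      ≤ g p + g q

/-- The quadratic form `xᵀAx` with `A` having rows
`(3,2,1,0), (2,3,2,1), (1,2,2,1), (0,1,1,1)`. -/
noncomputable def fEx18 : (Fin 4 → ℤ) → ℝ := fun x =>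
  ∑ i : Fin 4, ∑ j : Fin 4,
    (x i : ℝ) * (!![3, 2, 1, 0; 2, 3, 2, 1; 1, 2, 2, 1; 0, 1, 1, 1] : Matrix (Fin 4) (Fin 4) ℝ) i j * (x j : ℝ)

/-!
For a quadratic form `Q(x) = xᵀAx` on `ℤⁿ` the second difference
`Q(z+d) + Q(z+d') - Q(z) - Q(z+d+d')` does not depend on `z`, so `Q` is multimodular as soon as
the defining inequality holds at `z = 0`; for the given `A` this is a check over the twenty ordered
pairs of distinct directions.

As a function of `x₃`, `f(y₁, y₂, x₃, y₄)` is `2 x₃ (x₃ + s)` plus a constant, with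
`s = y₁ + 2y₂ + y₄`, and is minimised over `ℤ` at `x₃ = -⌊s/2⌋`. This gives `f^U(1,0,0) = 3`,
`f^U(2,-1,0) = f^U(1,1,-1) = 7` and `f^U(2,0,-1) = 13`, so the multimodular inequality fails at
`z = (1,0,0)` for the directions `e₁ - e₂` and `e₂ - e₃`: `3 + 13 > 7 + 7`.
-/

open Matrix

def mmDirVec (n k : ℕ) : Fin n → ℤ := fun j =>
  (if (j : ℕ) + 1 = k then 1 else 0) - (if (j : ℕ) + 1 = k + 1 then 1 else 0)

lemma mem_mmDir_iff {n : ℕ} {d : Fin n → ℤ} : d ∈ mmDir n ↔ ∃ k ≤ n, d = mmDirVec n k :=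
  Iff.rfl

lemma multimodular_coe_iff {n : ℕ} (f : (Fin n → ℤ) → ℝ) :
    Multimodular (fun x => (f x : WithTop ℝ)) ↔
      ∀ z, ∀ d ∈ mmDir n, ∀ d' ∈ mmDir n, d ≠ d' → f z + f (z + d + d') ≤ f (z + d) + f (z + d') := by
  simp only [Multimodular, ← WithTop.coe_add, WithTop.coe_le_coe, ne_eq, WithTop.coe_ne_top,
    not_false_eq_true, forall_const]

def intQuadForm {n : ℕ} (A : Matrix (Fin n) (Fin n) ℝ) (x : Fin n → ℤ) : ℝ :=
  ∑ i, ∑ j, (x i : ℝ) * A i j * (x j : ℝ)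

lemma intQuadForm_eq_dotProduct {n : ℕ} (A : Matrix (Fin n) (Fin n) ℝ) (x : Fin n → ℤ) :
    intQuadForm A x = (Int.cast ∘ x : Fin n → ℝ) ⬝ᵥ A *ᵥ (Int.cast ∘ x) := by
  rw [Matrix.dot_mulVec_eq_sum_sum, Finset.sum_comm]
  rfl

lemma intQuadForm_second_difference {n : ℕ} (A : Matrix (Fin n) (Fin n) ℝ) (z d d' : Fin n → ℤ) :
    intQuadForm A (z + d) + intQuadForm A (z + d') - intQuadForm A z - intQuadForm A (z + d + d')
      = intQuadForm A d + intQuadForm A d' - intQuadForm A (d + d') := by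
  have hcast : ∀ x y : Fin n → ℤ, (Int.cast ∘ (x + y) : Fin n → ℝ) = Int.cast ∘ x + Int.cast ∘ y :=
    fun x y => funext fun i => Int.cast_add (x i) (y i)
  simp only [intQuadForm_eq_dotProduct, hcast, mulVec_add, add_dotProduct, dotProduct_add]
  ring

lemma multimodular_intQuadForm {n : ℕ} (A : Matrix (Fin n) (Fin n) ℝ)
    (hA : ∀ d ∈ mmDir n, ∀ d' ∈ mmDir n, d ≠ d' →
      intQuadForm A (d + d') ≤ intQuadForm A d + intQuadForm A d') :
    Multimodular (fun x => (intQuadForm A x : WithTop ℝ)) := by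
  refine (multimodular_coe_iff _).2 fun z d hd d' hd' hne => ?_
  linarith [intQuadForm_second_difference A z d d', hA d hd d' hd' hne]

lemma fEx18_eq_intQuadForm : fEx18 = intQuadForm !![3, 2, 1, 0; 2, 3, 2, 1; 1, 2, 2, 1; 0, 1, 1, 1] :=
  rfl

lemma fEx18_apply (x : Fin 4 → ℤ) :
    fEx18 x = 3 * (x 0 : ℝ) ^ 2 + 3 * (x 1 : ℝ) ^ 2 + 2 * (x 2 : ℝ) ^ 2 + (x 3 : ℝ) ^ 2
      + 4 * x 0 * x 1 + 2 * x 0 * x 2 + 4 * x 1 * x 2 + 2 * x 1 * x 3 + 2 * x 2 * x 3 := by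
  simp only [fEx18, of_apply, cons_val', cons_val_fin_one, Fin.sum_univ_four, cons_val_zero,
    cons_val_one, cons_val, mul_one, mul_zero, zero_mul, add_zero, zero_add]
  ring

lemma multimodular_fEx18 : Multimodular (fun x : Fin 4 → ℤ => ((fEx18 x : ℝ) : WithTop ℝ)) := by
  rw [fEx18_eq_intQuadForm]
  refine multimodular_intQuadForm _ ?_
  simp only [← fEx18_eq_intQuadForm, mem_mmDir_iff]
  rintro _ ⟨k, hk, rfl⟩ _ ⟨k', hk', rfl⟩ hne
  interval_cases k <;> interval_cases k' <;> first
    | exact absurd rfl hne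
    | norm_num [fEx18_apply, mmDirVec]

lemma neg_ediv_two_mul_add_le (s z : ℤ) : -(s / 2) * (-(s / 2) + s) ≤ z * (z + s) := by
  -- `4 z (z + s) = (2z + s)² - s²`, and `2z + s` has the parity of `s`.
  have hsq : (s % 2) ^ 2 ≤ (2 * z + s) ^ 2 := by
    rcases Int.emod_two_eq_zero_or_one s with h | h
    · rw [h]; positivity
    · have hodd : 2 * z + s ≠ 0 := by omega
      rw [h]; nlinarith [sq_pos_of_ne_zero hodd]
  have hs : s = 2 * (s / 2) + s % 2 := by omega
  generalize s / 2 = q, s % 2 = r at hs hsq ⊢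
  subst hs
  nlinarith

lemma iInf_add_two_mul_mul_add (c : ℝ) (s : ℤ) :
    ⨅ z : ℤ, (c + 2 * z * (z + s)) = c + 2 * (-(s / 2) : ℤ) * ((-(s / 2) : ℤ) + s) := by
  refine IsLeast.csInf_eq ⟨⟨-(s / 2), rfl⟩, Set.forall_mem_range.2 fun z => ?_⟩
  have h : ((-(s / 2) * (-(s / 2) + s) : ℤ) : ℝ) ≤ ((z * (z + s) : ℤ) : ℝ) := by
    exact_mod_cast neg_ediv_two_mul_add_le s z
  push_cast at h ⊢
  linarith

lemma fEx18_fiber (a b c z : ℤ) :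
    fEx18 ![a, b, z, c] = fEx18 ![a, b, 0, c] + 2 * z * (z + (a + 2 * b + c : ℤ)) := by
  simp only [fEx18_apply, cons_val_zero, cons_val_one, cons_val, Int.cast_zero, Int.cast_add,
    Int.cast_mul, Int.cast_ofNat]
  ring

lemma iInf_fEx18_fiber (a b c : ℤ) :
    ⨅ z : ℤ, fEx18 ![a, b, z, c] = fEx18 ![a, b, -((a + 2 * b + c) / 2), c] := by
  rw [show (fun z : ℤ => fEx18 ![a, b, z, c]) = _ from funext (fEx18_fiber a b c),
    iInf_add_two_mul_mul_add, fEx18_fiber a b c (-((a + 2 * b + c) / 2))]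

lemma iInf_fEx18_exchange_lt :
    (⨅ z : ℤ, fEx18 ![2, -1, z, 0]) + ⨅ z : ℤ, fEx18 ![1, 1, z, -1]
      < (⨅ z : ℤ, fEx18 ![1, 0, z, 0]) + ⨅ z : ℤ, fEx18 ![2, 0, z, -1] := by
  simp only [iInf_fEx18_fiber]
  norm_num [fEx18_apply, cons_val_two, cons_val_three]

theorem projection_to_noninterval_not_multimodular :
    Multimodular (fun x : Fin 4 → ℤ => ((fEx18 x : ℝ) : WithTop ℝ)) ∧
      ¬ Multimodular (fun y : Fin 3 → ℤ =>
        (((⨅ z : ℤ, fEx18 ![y 0, y 1, z, y 2] : ℝ)) : WithTop ℝ)) := by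
  refine ⟨multimodular_fEx18, ?_⟩
  rw [multimodular_coe_iff]
  push Not
  refine ⟨![1, 0, 0], mmDirVec 3 1, mem_mmDir_iff.2 ⟨1, by norm_num, rfl⟩,
    mmDirVec 3 2, mem_mmDir_iff.2 ⟨2, by norm_num, rfl⟩, by decide, ?_⟩
  rw [show ![1, 0, 0] + mmDirVec 3 1 + mmDirVec 3 2 = ![2, 0, -1] by decide,
    show ![1, 0, 0] + mmDirVec 3 1 = ![2, -1, 0] by decide,
    show ![1, 0, 0] + mmDirVec 3 2 = ![1, 1, -1] by decide]
  exact iInf_fEx18_exchange_lt
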